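/- arXiv:2310.13786 — 4 statements merged into one kernel-verified Lean document; each statement's English description precedes it below -/
import Mathlib

section
/- Let K ≥ 2, δ ∈ [1/K, 1), and consider probability vectors (p_1,…,p_K) with max_k p_k = δ. Then the maximum of ∑_k √(p_k(1−p_k)) over such vectors equals √(δ(1−δ)) + √((1−δ)(K−2+δ)). -/
/-- for `K ≥ 2` and `δ ∈ [1/K, 1)`, the maximum of
`∑_k √(p_k(1-p_k))` over probability vectors `(p_1,…,p_K)` with largest coordinate
equal to `δ` is `√(δ(1-δ)) + √((1-δ)(K-2+δ))`. -/
theorem stmt10 (K : ℕ) (hK : 2 ≤ K) (δ : ℝ) (hδ1 : 1 / (K : ℝ) ≤ δ) (hδ2 : δ < 1) :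
    IsGreatest
      {s : ℝ | ∃ p : Fin K → ℝ, (∀ k, 0 ≤ p k) ∧ (∑ k, p k) = 1 ∧
        (∀ k, p k ≤ δ) ∧ (∃ k, p k = δ) ∧
        s = ∑ k, Real.sqrt (p k * (1 - p k))}
      (Real.sqrt (δ * (1 - δ)) + Real.sqrt ((1 - δ) * ((K : ℝ) - 2 + δ))) := by
  have hK2 : (2:ℝ) ≤ (K:ℝ) := by exact_mod_cast hK
  have hKpos : (0:ℝ) < K := by linarith
  have hK1 : (0:ℝ) < (K:ℝ) - 1 := by linarith
  have hδ0 : 0 ≤ δ := le_trans (by positivity) hδ1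
  have h1δ : 0 ≤ 1 - δ := by linarith
  have hKδ : 1 ≤ (K:ℝ) * δ := by
    rw [div_le_iff₀ hKpos] at hδ1; linarith
  have hcard : ∀ k₀ : Fin K, ((Finset.univ.erase k₀).card : ℝ) = (K:ℝ) - 1 := by
    intro k₀
    rw [Finset.card_erase_of_mem (Finset.mem_univ k₀)]
    simp [Nat.cast_sub (by omega : 1 ≤ K)]
  constructor
  · -- membership
    set q : ℝ := (1 - δ) / ((K:ℝ) - 1) with hq
    have hq0 : 0 ≤ q := by positivity
    have hqδ : q ≤ δ := by
      rw [hq, div_le_iff₀ hK1]; nlinarith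
    have hq1 : q ≤ 1 := le_trans hqδ hδ2.le
    have k₀ : Fin K := ⟨0, by omega⟩
    set p : Fin K → ℝ := Function.update (fun _ => q) k₀ δ with hp
    have hpk₀ : p k₀ = δ := Function.update_self _ _ _
    have hval : ∀ k ∈ Finset.univ.erase k₀, p k = q :=
      fun k hk => Function.update_of_ne (Finset.ne_of_mem_erase hk) _ _
    have hpcases : ∀ k, p k = δ ∨ p k = q := by
      intro k
      by_cases h : k = k₀
      · left; rw [h, hpk₀]
      · right; exact Function.update_of_ne h _ _
    refine ⟨p, fun k => (hpcases k).elim (fun h => h ▸ hδ0) (fun h => h ▸ hq0),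
      ?_, fun k => (hpcases k).elim (fun h => h.le) (fun h => h ▸ hqδ), ⟨k₀, hpk₀⟩, ?_⟩
    · rw [← Finset.add_sum_erase _ _ (Finset.mem_univ k₀), hpk₀,
        Finset.sum_congr rfl hval, Finset.sum_const, nsmul_eq_mul, hcard k₀]
      have : ((K:ℝ) - 1) * q = 1 - δ := by rw [hq]; field_simp
      linarith
    · rw [← Finset.add_sum_erase _ _ (Finset.mem_univ k₀), hpk₀]
      congr 1
      rw [Finset.sum_congr rfl (fun k hk => by rw [hval k hk]),
        Finset.sum_const, nsmul_eq_mul, hcard k₀]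
      have h1 : ((K:ℝ) - 1) * Real.sqrt (q * (1 - q))
          = Real.sqrt (((K:ℝ)-1)^2 * (q * (1 - q))) := by
        rw [Real.sqrt_mul (sq_nonneg ((K:ℝ)-1)), Real.sqrt_sq hK1.le]
      rw [h1]
      congr 1
      field_simp [hq]
      have hKq : ((K:ℝ) - 1) * q = 1 - δ := by rw [hq]; field_simp
      linear_combination (-((K:ℝ) - 1 - ((K:ℝ) - 1) * q - (1 - δ))) * hKq
  · -- upper bound
    rintro s ⟨p, hp0, hp1, hpδ, ⟨k₀, hk₀⟩, rfl⟩
    have hp1' : ∀ k, p k ≤ 1 := fun k => le_trans (hpδ k) hδ2.le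
    rw [← Finset.add_sum_erase _ _ (Finset.mem_univ k₀), hk₀]
    gcongr
    have hrw : ∀ k ∈ Finset.univ.erase k₀,
        Real.sqrt (p k * (1 - p k)) = Real.sqrt (p k) * Real.sqrt (1 - p k) := by
      intro k _; exact Real.sqrt_mul (hp0 k) _
    rw [Finset.sum_congr rfl hrw]
    calc ∑ k ∈ Finset.univ.erase k₀, Real.sqrt (p k) * Real.sqrt (1 - p k)
        ≤ Real.sqrt (∑ k ∈ Finset.univ.erase k₀, p k) *
          Real.sqrt (∑ k ∈ Finset.univ.erase k₀, (1 - p k)) :=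
          Real.sum_sqrt_mul_sqrt_le _ hp0 (fun k => by linarith [hp1' k])
      _ = Real.sqrt ((1 - δ) * ((K:ℝ) - 2 + δ)) := by
          have hs1 : ∑ k ∈ Finset.univ.erase k₀, p k = 1 - δ := by
            have h := Finset.add_sum_erase Finset.univ p (Finset.mem_univ k₀)
            rw [hp1, hk₀] at h
            linarith
          have hs2 : ∑ k ∈ Finset.univ.erase k₀, (1 - p k) = (K:ℝ) - 2 + δ := by
            rw [Finset.sum_sub_distrib, Finset.sum_const, nsmul_eq_mul, hcard k₀, hs1]
            ring
          rw [hs1, hs2, ← Real.sqrt_mul h1δ]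
end

section
/- Let K ≥ 2, δ ∈ [1/K, 1), and consider probability vectors (p_1,…,p_K) with max_k p_k = δ. Then the infimum of ∑_k √(p_k(1−p_k)) over such vectors equals √(δ(1−δ))·⌊1/δ⌋ + √(δ⌊1/δ⌋(1 − δ⌊1/δ⌋)). -/
theorem lemA (u y : ℝ) (hu : 0 ≤ u) (hy : 0 ≤ y) (h1 : u + y ≤ 1) :
    Real.sqrt ((u+y) * (1 - (u+y))) ≤ Real.sqrt (u*(1-u)) + Real.sqrt (y*(1-y)) := by
  have hu1 : 0 ≤ u*(1-u) := by nlinarith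
  have hy1 : 0 ≤ y*(1-y) := by nlinarith
  have h3 : 0 ≤ (u+y)*(1-(u+y)) := by nlinarith
  have s1 := Real.sq_sqrt hu1
  have s2 := Real.sq_sqrt hy1
  have s3 := Real.sq_sqrt h3
  have n1 := Real.sqrt_nonneg (u*(1-u))
  have n2 := Real.sqrt_nonneg (y*(1-y))
  have n3 := Real.sqrt_nonneg ((u+y)*(1-(u+y)))
  nlinarith [mul_nonneg hu hy, mul_nonneg n1 n2,
    sq_nonneg (Real.sqrt (u*(1-u)) + Real.sqrt (y*(1-y)) - Real.sqrt ((u+y)*(1-(u+y))))]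

theorem lemB (δ u y : ℝ) (hδ1 : δ < 1) (hu : 0 ≤ u) (hy : 0 ≤ y)
    (hu' : u ≤ δ) (hy' : y ≤ δ) (h : δ ≤ u + y) :
    Real.sqrt (δ*(1-δ)) + Real.sqrt ((u+y-δ)*(1-(u+y-δ))) ≤
      Real.sqrt (u*(1-u)) + Real.sqrt (y*(1-y)) := by
  set w := u + y - δ with hw
  have hw0 : 0 ≤ w := by linarith
  have hwδ : w ≤ δ := by linarith
  have hδ0 : 0 ≤ δ := le_trans hu hu'
  have hu1 : 0 ≤ u*(1-u) := by nlinarith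
  have hy1 : 0 ≤ y*(1-y) := by nlinarith
  have hδp : 0 ≤ δ*(1-δ) := by nlinarith
  have hwp : 0 ≤ w*(1-w) := by nlinarith
  have ht : 0 ≤ (δ-u)*(δ-y) := mul_nonneg (by linarith) (by linarith)
  have cross : Real.sqrt (δ*(1-δ)) * Real.sqrt (w*(1-w)) ≤
      Real.sqrt (u*(1-u)) * Real.sqrt (y*(1-y)) := by
    rw [← Real.sqrt_mul hδp, ← Real.sqrt_mul hu1]
    apply Real.sqrt_le_sqrt
    have key : u*(1-u)*(y*(1-y)) - δ*(1-δ)*(w*(1-w)) =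
        ((δ-u)*(δ-y))*(δ*w) + ((δ-u)*(δ-y))*((1-δ)*(1-w)) + ((δ-u)*(δ-y))*((δ-u)*(δ-y)) := by
      rw [hw]; ring
    nlinarith [mul_nonneg ht (mul_nonneg hδ0 hw0),
      mul_nonneg ht (mul_nonneg (by linarith : (0:ℝ) ≤ 1-δ) (by linarith : (0:ℝ) ≤ 1-w)),
      mul_nonneg ht ht]
  have s1 := Real.sq_sqrt hu1
  have s2 := Real.sq_sqrt hy1
  have s3 := Real.sq_sqrt hδp
  have s4 := Real.sq_sqrt hwp
  have n1 := Real.sqrt_nonneg (u*(1-u))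
  have n2 := Real.sqrt_nonneg (y*(1-y))
  have n3 := Real.sqrt_nonneg (δ*(1-δ))
  have n4 := Real.sqrt_nonneg (w*(1-w))
  nlinarith [ht, cross,
    sq_nonneg (Real.sqrt (u*(1-u)) + Real.sqrt (y*(1-y)) - Real.sqrt (δ*(1-δ)) - Real.sqrt (w*(1-w)))]

theorem keyLem (δ : ℝ) (hδ0 : 0 < δ) (hδ1 : δ < 1) {n : ℕ} (p : Fin n → ℝ)
    (T : Finset (Fin n)) (h : ∀ k ∈ T, 0 ≤ p k ∧ p k ≤ δ) :
    ∃ a : ℕ, ∃ u : ℝ, 0 ≤ u ∧ u < δ ∧ (∑ k ∈ T, p k) = a*δ + u ∧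
      Real.sqrt (δ*(1-δ)) * a + Real.sqrt (u*(1-u)) ≤
        ∑ k ∈ T, Real.sqrt (p k * (1 - p k)) := by
  induction T using Finset.induction_on with
  | empty =>
    exact ⟨0, 0, le_refl 0, hδ0, by simp, by simp⟩
  | insert _ _ hk ih =>
    rename_i k T
    obtain ⟨a, u, hu0, huδ, hsum, hle⟩ := ih (fun j hj => h j (Finset.mem_insert_of_mem hj))
    obtain ⟨hpk0, hpkδ⟩ := h k (Finset.mem_insert_self k T)
    rw [Finset.sum_insert hk, Finset.sum_insert hk]
    by_cases hc : u + p k < δ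
    · refine ⟨a, u + p k, by positivity, hc, by rw [hsum]; ring, ?_⟩
      linarith [lemA u (p k) hu0 hpk0 (by linarith)]
    · push_neg at hc
      refine ⟨a + 1, u + p k - δ, by linarith, by linarith, by rw [hsum]; push_cast; ring, ?_⟩
      have hB := lemB δ u (p k) hδ1 hu0 hpk0 (le_of_lt huδ) hpkδ hc
      push_cast
      nlinarith [hB, hle]

/-- for `K ≥ 2` and `δ ∈ [1/K, 1)`, the infimum of
`∑_k √(p_k(1-p_k))` over probability vectors `(p_1,…,p_K)` with largest coordinate
equal to `δ` is `√(δ(1-δ)) ⌊1/δ⌋ + √(δ⌊1/δ⌋(1 - δ⌊1/δ⌋))`. -/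
theorem stmt11 (K : ℕ) (hK : 2 ≤ K) (δ : ℝ) (hδ1 : 1 / (K : ℝ) ≤ δ) (hδ2 : δ < 1) :
    sInf {s : ℝ | ∃ p : Fin K → ℝ, (∀ k, 0 ≤ p k) ∧ (∑ k, p k) = 1 ∧
        (∀ k, p k ≤ δ) ∧ (∃ k, p k = δ) ∧
        s = ∑ k, Real.sqrt (p k * (1 - p k))}
      = Real.sqrt (δ * (1 - δ)) * (⌊1 / δ⌋₊ : ℝ) +
        Real.sqrt (δ * (⌊1 / δ⌋₊ : ℝ) * (1 - δ * (⌊1 / δ⌋₊ : ℝ))) := by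
  have hKR : (0:ℝ) < K := by positivity
  have hδ0 : 0 < δ := lt_of_lt_of_le (by positivity) hδ1
  set m := ⌊1/δ⌋₊ with hm
  have hmle : (m:ℝ) ≤ 1/δ := Nat.floor_le (by positivity)
  have hmlt : 1/δ < m + 1 := Nat.lt_floor_add_one _
  have hm1 : 1 ≤ m := Nat.le_floor (by rw [Nat.cast_one, le_div_iff₀ hδ0]; linarith)
  have hmK : m ≤ K := by
    have h1 : 1/δ ≤ (K:ℝ) := by rw [div_le_iff₀ hδ0]; rw [div_le_iff₀ hKR] at hδ1; linarith
    have h2 := Nat.floor_le_floor h1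
    rwa [Nat.floor_natCast] at h2
  have hmδ1 : (m:ℝ)*δ ≤ 1 := by rw [← le_div_iff₀ hδ0]; exact hmle
  have h1mδ : 1 < ((m:ℝ)+1)*δ := by rw [← div_lt_iff₀ hδ0]; exact hmlt
  set r := 1 - (m:ℝ)*δ with hr
  have hr0 : 0 ≤ r := by simp [hr]; linarith
  have hrδ : r < δ := by simp [hr]; nlinarith
  have hrK : m = K → r = 0 := by
    intro hmk
    have : (K:ℝ) ≤ 1/δ := by rw [hmk] at hmle; exact_mod_cast hmle
    have hδK : δ ≤ 1/K := by rw [le_div_iff₀ hKR]; rw [le_div_iff₀ hδ0] at this; linarith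
    have : δ = 1/K := le_antisymm hδK hδ1
    rw [hr, hmk, this]
    field_simp
    norm_num
  -- target value
  set V := Real.sqrt (δ * (1 - δ)) * (m : ℝ) +
      Real.sqrt (δ * (m : ℝ) * (1 - δ * (m : ℝ))) with hV
  have hVr : Real.sqrt (δ * (m : ℝ) * (1 - δ * (m : ℝ))) = Real.sqrt (r*(1-r)) := by
    congr 1; rw [hr]; ring
  -- generic sum computation
  have gensum : ∀ (c d : ℝ), (m = K → d = 0) →
      (∑ k : Fin K, (if (k:ℕ) < m then c else if (k:ℕ) = m then d else 0)) = m*c + d := by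
    intro c d hd
    rw [Fin.sum_univ_eq_sum_range (fun i => if i < m then c else if i = m then d else 0) K]
    rw [Finset.range_eq_Ico, ← Finset.sum_Ico_consecutive _ (Nat.zero_le m) hmK]
    have h1 : (∑ i ∈ Finset.Ico 0 m, (if i < m then c else if i = m then d else 0)) = m*c := by
      rw [Finset.sum_congr rfl (fun i hi => if_pos (Finset.mem_Ico.mp hi).2)]
      simp [mul_comm]
    have h2 : (∑ i ∈ Finset.Ico m K, (if i < m then c else if i = m then d else 0)) = d := by
      rw [Finset.sum_congr rfl
        (fun i hi => if_neg (by have := (Finset.mem_Ico.mp hi).1; omega))]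
      rcases lt_or_eq_of_le hmK with hlt | heq
      · rw [Finset.sum_ite_eq' (Finset.Ico m K) m (fun _ => d)]
        simp [Finset.mem_Ico, hlt]
      · simp [heq, hd heq]
    rw [h1, h2]
  -- witness vector
  set p : Fin K → ℝ := fun k => if (k:ℕ) < m then δ else if (k:ℕ) = m then r else 0 with hp
  have hpsum : (∑ k, p k) = 1 := by
    rw [hp, gensum δ r hrK, hr]; ring
  have hpf : (∑ k, Real.sqrt (p k * (1 - p k))) = V := by
    have e : ∀ k : Fin K, Real.sqrt (p k * (1 - p k)) =
        (if (k:ℕ) < m then Real.sqrt (δ*(1-δ)) else if (k:ℕ) = m then Real.sqrt (r*(1-r)) else 0) := by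
      intro k
      simp only [hp]
      split_ifs <;> simp
    rw [Finset.sum_congr rfl (fun k _ => e k),
      gensum _ _ (fun h => by rw [hrK h]; simp), hV, hVr, mul_comm]
  have h0 : ∀ k, 0 ≤ p k := by
    intro k; simp only [hp]; split_ifs
    · exact le_of_lt hδ0
    · exact hr0
    · exact le_refl 0
  have hbd : ∀ k, p k ≤ δ := by
    intro k; simp only [hp]; split_ifs
    · exact le_refl δ
    · exact le_of_lt hrδ
    · exact le_of_lt hδ0
  have hex : p ⟨0, by omega⟩ = δ := by
    simp only [hp]
    rw [if_pos]
    show 0 < m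
    omega
  have hmem : V ∈ {s : ℝ | ∃ p : Fin K → ℝ, (∀ k, 0 ≤ p k) ∧ (∑ k, p k) = 1 ∧
      (∀ k, p k ≤ δ) ∧ (∃ k, p k = δ) ∧
      s = ∑ k, Real.sqrt (p k * (1 - p k))} :=
    ⟨p, h0, hpsum, hbd, ⟨⟨0, by omega⟩, hex⟩, hpf.symm⟩
  have hlb : ∀ s ∈ {s : ℝ | ∃ p : Fin K → ℝ, (∀ k, 0 ≤ p k) ∧ (∑ k, p k) = 1 ∧
      (∀ k, p k ≤ δ) ∧ (∃ k, p k = δ) ∧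
      s = ∑ k, Real.sqrt (p k * (1 - p k))}, V ≤ s := by
    rintro s ⟨q, hq0, hqsum, hqδ, -, rfl⟩
    obtain ⟨a, u, hu0, huδ, hsum, hle⟩ :=
      keyLem δ hδ0 hδ2 q Finset.univ (fun k _ => ⟨hq0 k, hqδ k⟩)
    rw [hqsum] at hsum
    have ha : a = m := by
      symm
      rw [hm, Nat.floor_eq_iff (by positivity)]
      constructor
      · rw [le_div_iff₀ hδ0]; nlinarith
      · rw [div_lt_iff₀ hδ0]; nlinarith
    have hu : u = r := by rw [hr, ← ha]; linarith
    rw [ha, hu] at hle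
    calc V = Real.sqrt (δ*(1-δ)) * (m:ℝ) + Real.sqrt (r*(1-r)) := by rw [hV, hVr]
      _ ≤ _ := hle
  exact le_antisymm (csInf_le ⟨V, hlb⟩ hmem) (le_csInf ⟨V, hmem⟩ hlb)
end

section
/- Let X be a discrete random variable with probability masses (p_1,…,p_K), K finite. Then the Shannon entropy satisfies H(X) ≤ ∑_k √(p_k(1−p_k)) ≤ √K · √H(X), where H(X) = −∑_k p_k log p_k. -/
open Real Finset

/-- Auxiliary: `2 log t ≥ t - 1/t` for `t ∈ (0,1]`. -/
lemma aux_log_ge (t : ℝ) (ht : 0 < t) (ht1 : t ≤ 1) :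
    t - t⁻¹ ≤ 2 * Real.log t := by
  set f : ℝ → ℝ := fun x => 2 * Real.log x - x + x⁻¹ with hf
  have hanti : AntitoneOn f (Set.Ioi (0:ℝ)) := by
    apply antitoneOn_of_deriv_nonpos (convex_Ioi 0)
    · apply ContinuousOn.add
      · exact ContinuousOn.sub ((continuousOn_const).mul
          (Real.continuousOn_log.mono (by intro x hx; exact ne_of_gt hx)))
          continuousOn_id
      · exact continuousOn_inv₀.mono (by intro x hx; exact ne_of_gt hx)
    · rw [interior_Ioi]
      intro x hx
      have hx' : (0:ℝ) < x := hx
      exact ((((differentiableAt_const _).mul (Real.differentiableAt_log hx'.ne')).sub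
        differentiableAt_fun_id).add (differentiableAt_inv hx'.ne')).differentiableWithinAt
    · rw [interior_Ioi]
      intro x hx
      have hx' : (0:ℝ) < x := hx
      have hd : deriv f x = 2 / x - 1 - x⁻¹ ^ 2 := by
        rw [hf]
        have h1 : deriv (fun x : ℝ => 2 * Real.log x - x + x⁻¹) x
            = deriv (fun x : ℝ => 2 * Real.log x - x) x + deriv (fun x : ℝ => x⁻¹) x := by
          apply deriv_fun_add
          · exact (((differentiableAt_const _).mul (Real.differentiableAt_log hx'.ne')).sub
              differentiableAt_fun_id)
          · exact differentiableAt_inv hx'.ne'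
        rw [h1, deriv_fun_sub (f := fun x : ℝ => 2 * Real.log x) (((differentiableAt_const _).mul
            (Real.differentiableAt_log hx'.ne'))) differentiableAt_fun_id,
          deriv_const_mul _ (Real.differentiableAt_log hx'.ne'), Real.deriv_log,
          deriv_id'', deriv_inv]
        field_simp
        ring
      rw [hd]
      have : (2 / x - 1 - x⁻¹ ^ 2) = -((x - 1)^2 / x^2) := by
        field_simp
        ring
      rw [this]
      apply neg_nonpos_of_nonneg
      positivity
  have h1 : f 1 ≤ f t := hanti (Set.mem_Ioi.mpr ht) (Set.mem_Ioi.mpr one_pos) ht1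
  simp only [hf, Real.log_one, inv_one] at h1
  linarith

/-- Pointwise: `-p log p ≤ √(p(1-p))` for `p ∈ (0,1]`. -/
lemma aux_pt (x : ℝ) (hx : 0 < x) (hx1 : x ≤ 1) :
    -(x * Real.log x) ≤ Real.sqrt (x * (1 - x)) := by
  set t := Real.sqrt x with htdef
  have ht : 0 < t := Real.sqrt_pos.mpr hx
  have ht1 : t ≤ 1 := by
    rw [htdef, show (1:ℝ) = Real.sqrt 1 by simp]
    exact Real.sqrt_le_sqrt hx1
  have htsq : t ^ 2 = x := Real.sq_sqrt hx.le
  have hlog : Real.log x = 2 * Real.log t := by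
    rw [← htsq, Real.log_pow]; push_cast; ring
  have hkey := aux_log_ge t ht ht1
  -- -log x ≤ (1-x)/t
  have h2 : -Real.log x ≤ t⁻¹ - t := by rw [hlog]; linarith
  have h3 : -(x * Real.log x) ≤ x * (t⁻¹ - t) := by
    have := mul_le_mul_of_nonneg_left h2 hx.le
    linarith
  have h4 : x * (t⁻¹ - t) = t * (1 - x) := by
    field_simp
    nlinarith [htsq]
  have h5 : t * (1 - x) ≤ t * Real.sqrt (1 - x) := by
    apply mul_le_mul_of_nonneg_left _ ht.le
    have hs1 : Real.sqrt (1 - x) ≤ 1 := Real.sqrt_le_one.mpr (by linarith)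
    have hs2 : Real.sqrt (1 - x) ^ 2 = 1 - x := Real.sq_sqrt (by linarith)
    nlinarith [Real.sqrt_nonneg (1 - x)]
  have h6 : t * Real.sqrt (1 - x) = Real.sqrt (x * (1 - x)) := by
    rw [htdef, ← Real.sqrt_mul hx.le]
  linarith [h3, h4 ▸ h3, h5, h6 ▸ h5]

/-- for a probability vector `(p_1,…,p_K)` with all `p_k > 0`, the
Shannon entropy `H = -∑_k p_k log p_k` satisfies
`H ≤ ∑_k √(p_k(1-p_k)) ≤ √K √H`. -/
theorem stmt14 (K : ℕ) (hK : 1 ≤ K) (p : Fin K → ℝ)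
    (hp : ∀ k, 0 < p k) (hsum : ∑ k, p k = 1) :
    (-∑ k, p k * Real.log (p k)) ≤ (∑ k, Real.sqrt (p k * (1 - p k))) ∧
    (∑ k, Real.sqrt (p k * (1 - p k)))
      ≤ Real.sqrt K * Real.sqrt (-∑ k, p k * Real.log (p k)) := by
  have hple : ∀ k, p k ≤ 1 := by
    intro k
    rw [← hsum]
    exact Finset.single_le_sum (fun i _ => (hp i).le) (Finset.mem_univ k)
  constructor
  · rw [← Finset.sum_neg_distrib]
    exact Finset.sum_le_sum fun k _ => aux_pt (p k) (hp k) (hple k)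
  · -- Cauchy-Schwarz then pointwise p(1-p) ≤ -p log p
    have hH : ∑ k, p k * (1 - p k) ≤ -∑ k, p k * Real.log (p k) := by
      rw [← Finset.sum_neg_distrib]
      apply Finset.sum_le_sum
      intro k _
      have hlog := Real.log_le_sub_one_of_pos (hp k)
      nlinarith [(hp k).le]
    have hCS : (∑ k, Real.sqrt (p k * (1 - p k))) ^ 2
        ≤ K * ∑ k, p k * (1 - p k) := by
      have := sq_sum_le_card_mul_sum_sq (s := Finset.univ)
        (f := fun k : Fin K => Real.sqrt (p k * (1 - p k)))
      simp only [Finset.card_univ, Fintype.card_fin] at this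
      calc (∑ k, Real.sqrt (p k * (1 - p k))) ^ 2
          ≤ (K : ℝ) * ∑ k, Real.sqrt (p k * (1 - p k)) ^ 2 := by exact_mod_cast this
        _ = (K : ℝ) * ∑ k, p k * (1 - p k) := by
            congr 1
            apply Finset.sum_congr rfl
            intro k _
            exact Real.sq_sqrt (by nlinarith [(hp k).le, hple k])
    have hs_nonneg : 0 ≤ ∑ k, Real.sqrt (p k * (1 - p k)) :=
      Finset.sum_nonneg fun k _ => Real.sqrt_nonneg _
    have h1 : (∑ k, Real.sqrt (p k * (1 - p k))) ^ 2
        ≤ K * (-∑ k, p k * Real.log (p k)) := by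
      calc (∑ k, Real.sqrt (p k * (1 - p k))) ^ 2
          ≤ K * ∑ k, p k * (1 - p k) := hCS
        _ ≤ K * (-∑ k, p k * Real.log (p k)) := by
            apply mul_le_mul_of_nonneg_left hH (by positivity)
    calc ∑ k, Real.sqrt (p k * (1 - p k))
        = Real.sqrt ((∑ k, Real.sqrt (p k * (1 - p k))) ^ 2) :=
          (Real.sqrt_sq hs_nonneg).symm
      _ ≤ Real.sqrt (K * (-∑ k, p k * Real.log (p k))) := Real.sqrt_le_sqrt h1
      _ = Real.sqrt K * Real.sqrt (-∑ k, p k * Real.log (p k)) :=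
          Real.sqrt_mul (by positivity) _
end

section
/- Let B_1,…,B_K with B_k ~ Binomial(n, p_k) for a probability vector (p_1,…,p_K). Then the function f⁺(x) = ∑_{k=1}^K E[|x·B_k/n − p_k|] − (x − 1) is non-increasing on [1, ∞). -/
lemma binom_sum_one (m : ℕ) (p : ℝ) :
    ∑ i ∈ Finset.range (m + 1), (m.choose i : ℝ) * p ^ i * (1 - p) ^ (m - i) = 1 := by
  have h := add_pow p (1 - p) m
  simp only [add_sub_cancel, one_pow] at h
  calc ∑ i ∈ Finset.range (m + 1), (m.choose i : ℝ) * p ^ i * (1 - p) ^ (m - i)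
      = ∑ i ∈ Finset.range (m + 1), p ^ i * (1 - p) ^ (m - i) * (m.choose i : ℝ) := by
        apply Finset.sum_congr rfl; intro i _; ring
    _ = 1 := h.symm

lemma binom_mean (n : ℕ) (hn : 1 ≤ n) (p : ℝ) :
    ∑ j ∈ Finset.range (n + 1),
      (n.choose j : ℝ) * p ^ j * (1 - p) ^ (n - j) * (j : ℝ) = n * p := by
  obtain ⟨m, rfl⟩ : ∃ m, n = m + 1 := ⟨n - 1, by omega⟩
  rw [Finset.sum_range_succ']
  simp only [Nat.cast_zero, mul_zero, add_zero]
  push_cast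
  have key : ∀ i ∈ Finset.range (m + 1),
      ((m + 1).choose (i + 1) : ℝ) * p ^ (i + 1) * (1 - p) ^ (m - i) * ((i : ℝ) + 1)
        = ((m : ℝ) + 1) * p * ((m.choose i : ℝ) * p ^ i * (1 - p) ^ (m - i)) := by
    intro i _
    have hnat : (m + 1) * m.choose i = (m + 1).choose (i + 1) * (i + 1) :=
      Nat.add_one_mul_choose_eq m i
    have hreal : ((m : ℝ) + 1) * (m.choose i : ℝ) = ((m + 1).choose (i + 1) : ℝ) * ((i : ℝ) + 1) := by
      exact_mod_cast congrArg (Nat.cast : ℕ → ℝ) hnat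
    rw [pow_succ]
    linear_combination (p ^ i * p * (1 - p) ^ (m - i)) * hreal.symm
  calc ∑ i ∈ Finset.range (m + 1),
        ((m + 1).choose (i + 1) : ℝ) * p ^ (i + 1) * (1 - p) ^ (m - i) * ((i : ℝ) + 1)
      = ∑ i ∈ Finset.range (m + 1),
        ((m : ℝ) + 1) * p * ((m.choose i : ℝ) * p ^ i * (1 - p) ^ (m - i)) :=
        Finset.sum_congr rfl key
    _ = ((m : ℝ) + 1) * p * ∑ i ∈ Finset.range (m + 1),
          (m.choose i : ℝ) * p ^ i * (1 - p) ^ (m - i) := by rw [Finset.mul_sum]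
    _ = ((m : ℝ) + 1) * p := by rw [binom_sum_one]; ring

/-- with `B_k ~ Binomial(n, p_k)` (expectations written via the
binomial pmf), the function `f⁺(x) = ∑_k E[|x B_k/n - p_k|] - (x-1)` is
non-increasing on `[1, ∞)`. -/
theorem stmt16 (K n : ℕ) (hn : 1 ≤ n) (p : Fin K → ℝ)
    (hp : ∀ k, 0 < p k) (hsum : ∑ k, p k = 1) :
    AntitoneOn (fun x : ℝ =>
      (∑ k, ∑ j ∈ Finset.range (n + 1),
        (n.choose j : ℝ) * p k ^ j * (1 - p k) ^ (n - j) *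
          |x * (j : ℝ) / (n : ℝ) - p k|) - (x - 1))
      (Set.Ici (1 : ℝ)) := by
  intro a ha b hb hab
  simp only [Set.mem_Ici] at ha hb
  have hn0 : (0 : ℝ) < (n : ℝ) := by exact_mod_cast hn
  have hp1 : ∀ k, p k ≤ 1 := by
    intro k
    calc p k ≤ ∑ j, p j :=
          Finset.single_le_sum (fun j _ => (hp j).le) (Finset.mem_univ k)
      _ = 1 := hsum
  have hw : ∀ (k : Fin K) (j : ℕ),
      0 ≤ (n.choose j : ℝ) * p k ^ j * (1 - p k) ^ (n - j) := by
    intro k j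
    have h1 : (0 : ℝ) ≤ 1 - p k := by linarith [hp1 k]
    exact mul_nonneg (mul_nonneg (Nat.cast_nonneg _) (pow_nonneg (hp k).le _))
      (pow_nonneg h1 _)
  -- termwise bound
  have hterm : ∀ (k : Fin K), ∀ j ∈ Finset.range (n + 1),
      (n.choose j : ℝ) * p k ^ j * (1 - p k) ^ (n - j) * |b * (j : ℝ) / (n : ℝ) - p k|
        ≤ (n.choose j : ℝ) * p k ^ j * (1 - p k) ^ (n - j) *
            (|a * (j : ℝ) / (n : ℝ) - p k| + (b - a) * (j : ℝ) / (n : ℝ)) := by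
    intro k j _
    apply mul_le_mul_of_nonneg_left _ (hw k j)
    have habs : |b * (j : ℝ) / (n : ℝ) - p k| ≤
        |a * (j : ℝ) / (n : ℝ) - p k| + |(b - a) * (j : ℝ) / (n : ℝ)| := by
      have : b * (j : ℝ) / (n : ℝ) - p k
          = (a * (j : ℝ) / (n : ℝ) - p k) + (b - a) * (j : ℝ) / (n : ℝ) := by ring
      rw [this]; exact abs_add_le _ _
    have hnn : (0 : ℝ) ≤ (b - a) * (j : ℝ) / (n : ℝ) := by
      apply div_nonneg _ hn0.le
      exact mul_nonneg (by linarith) (Nat.cast_nonneg j)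
    rwa [abs_of_nonneg hnn] at habs
  have hmean : ∀ k : Fin K,
      ∑ j ∈ Finset.range (n + 1),
        (n.choose j : ℝ) * p k ^ j * (1 - p k) ^ (n - j) *
          ((b - a) * (j : ℝ) / (n : ℝ)) = (b - a) * p k := by
    intro k
    have h := binom_mean n hn (p k)
    have : ∑ j ∈ Finset.range (n + 1),
        (n.choose j : ℝ) * p k ^ j * (1 - p k) ^ (n - j) *
          ((b - a) * (j : ℝ) / (n : ℝ))
        = ((b - a) / (n : ℝ)) * ∑ j ∈ Finset.range (n + 1),
            (n.choose j : ℝ) * p k ^ j * (1 - p k) ^ (n - j) * (j : ℝ) := by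
      rw [Finset.mul_sum]
      apply Finset.sum_congr rfl
      intro j _
      ring
    rw [this, h]
    field_simp
  have hmain : (∑ k, ∑ j ∈ Finset.range (n + 1),
        (n.choose j : ℝ) * p k ^ j * (1 - p k) ^ (n - j) *
          |b * (j : ℝ) / (n : ℝ) - p k|)
      ≤ (∑ k, ∑ j ∈ Finset.range (n + 1),
        (n.choose j : ℝ) * p k ^ j * (1 - p k) ^ (n - j) *
          |a * (j : ℝ) / (n : ℝ) - p k|) + (b - a) := by
    calc (∑ k, ∑ j ∈ Finset.range (n + 1),
          (n.choose j : ℝ) * p k ^ j * (1 - p k) ^ (n - j) *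
            |b * (j : ℝ) / (n : ℝ) - p k|)
        ≤ ∑ k, ∑ j ∈ Finset.range (n + 1),
            (n.choose j : ℝ) * p k ^ j * (1 - p k) ^ (n - j) *
              (|a * (j : ℝ) / (n : ℝ) - p k| + (b - a) * (j : ℝ) / (n : ℝ)) := by
          apply Finset.sum_le_sum
          intro k _
          exact Finset.sum_le_sum (hterm k)
      _ = ∑ k, ((∑ j ∈ Finset.range (n + 1),
            (n.choose j : ℝ) * p k ^ j * (1 - p k) ^ (n - j) *
              |a * (j : ℝ) / (n : ℝ) - p k|) + (b - a) * p k) := by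
          apply Finset.sum_congr rfl
          intro k _
          rw [← hmean k, ← Finset.sum_add_distrib]
          apply Finset.sum_congr rfl
          intro j _
          ring
      _ = (∑ k, ∑ j ∈ Finset.range (n + 1),
            (n.choose j : ℝ) * p k ^ j * (1 - p k) ^ (n - j) *
              |a * (j : ℝ) / (n : ℝ) - p k|) + (b - a) := by
          rw [Finset.sum_add_distrib, ← Finset.mul_sum, hsum, mul_one]
  simp only
  linarith
end
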